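/- Closed form for expected improvement under a univariate Student-t predictive: if f(x) has the MVT₁(ν', μ̃, τ̃²) distribution with ν' > 1, then E[max(f_best − f(x), 0)] = γ̃τ̃Λ_{ν'}(γ̃) + τ̃(1 + (γ̃² − 1)/(ν' − 1))λ_{ν'}(γ̃), where γ̃ = (f_best − μ̃)/τ̃, and λ_{ν'}, Λ_{ν'} are the density and CDF of MVT₁(ν', 0, 1). Equivalently, ∫_{-∞}^{f_best} (f_best − y)·(1/τ̃)·λ_{ν'}((y − μ̃)/τ̃) dy equals the stated expression. -/

import Mathlib

open MeasureTheory Real Matrix Filter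

noncomputable def mvt {ι : Type*} [Fintype ι] [DecidableEq ι] (ν : ℝ) (φ : ι → ℝ)
    (K : Matrix ι ι ℝ) (y : ι → ℝ) : ℝ :=
  Real.Gamma ((ν + Fintype.card ι) / 2) /
      (((ν - 2) * Real.pi) ^ ((Fintype.card ι : ℝ) / 2) * Real.Gamma (ν / 2)) *
    K.det ^ (-(1:ℝ)/2) *
    (1 + (y - φ) ⬝ᵥ K⁻¹ *ᵥ (y - φ) / (ν - 2)) ^ (-((ν + Fintype.card ι) / 2))

noncomputable def gaussD {ι : Type*} [Fintype ι] [DecidableEq ι] (φ : ι → ℝ)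
    (S : Matrix ι ι ℝ) (y : ι → ℝ) : ℝ :=
  (2 * Real.pi) ^ (-(Fintype.card ι : ℝ)/2) * S.det ^ (-(1:ℝ)/2) *
    Real.exp (-((y - φ) ⬝ᵥ S⁻¹ *ᵥ (y - φ)) / 2)

noncomputable def toSym {n : ℕ} (u : {p : Fin n × Fin n // p.1 ≤ p.2} → ℝ) :
    Matrix (Fin n) (Fin n) ℝ :=
  Matrix.of fun i j => if h : i ≤ j then u ⟨(i, j), h⟩ else u ⟨(j, i), le_of_not_ge h⟩

/-- Multivariate gamma function: `Γ_n(a) = π^{n(n-1)/4} ∏_{j=1}^n Γ(a + (1-j)/2)`. -/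
noncomputable def mgamma (n : ℕ) (a : ℝ) : ℝ :=
  Real.pi ^ ((n * (n - 1) : ℝ) / 4) * ∏ j ∈ Finset.range n, Real.Gamma (a - j / 2)

/-- Dawid-parameterized inverse Wishart density. -/
noncomputable def iwD (n : ℕ) (ν : ℝ) (K Sg : Matrix (Fin n) (Fin n) ℝ) : ℝ :=
  K.det ^ ((ν + n - 1) / 2) / (2 ^ ((ν + n - 1) * n / 2) * mgamma n ((ν + n - 1) / 2)) *
    Sg.det ^ (-(ν + 2 * n) / 2) * Real.exp (-(K * Sg⁻¹).trace / 2)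

/-- Wishart density with `ν` degrees of freedom and scale matrix `S`. -/
noncomputable def wishD (n : ℕ) (ν : ℝ) (S Sg : Matrix (Fin n) (Fin n) ℝ) : ℝ :=
  (S.det ^ (ν / 2) * 2 ^ (ν * n / 2) * mgamma n (ν / 2))⁻¹ *
    Sg.det ^ ((ν - n - 1) / 2) * Real.exp (-(S⁻¹ * Sg).trace / 2)

/-- Inverse-gamma density (density of `r` when `r⁻¹ ~ Γ(a, b)`). -/
noncomputable def igD (a b r : ℝ) : ℝ :=
  b ^ a * r ^ (-a - 1) * Real.exp (-b / r) / Real.Gamma a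

/-- Standardized Student-t density (paper's mean/variance parameterization). -/
noncomputable def tDens (ν z : ℝ) : ℝ :=
  Real.Gamma ((ν + 1) / 2) / (Real.sqrt ((ν - 2) * Real.pi) * Real.Gamma (ν / 2)) *
    (1 + z ^ 2 / (ν - 2)) ^ (-(ν + 1) / 2)

/-- Standardized Student-t CDF. -/
noncomputable def tCDF (ν x : ℝ) : ℝ := ∫ z in Set.Iic x, tDens ν z

open Set Topology

/-! After substituting `z = (y - μ) / τ` the integrand becomes `(γ - z) λ(z)`. The score identity
`λ'(z) = -(ν + 1) z / (ν - 2 + z²) · λ(z)` shows that `-(ν - 2 + z²) / (ν - 1) · λ(z)` is an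
antiderivative of `z λ(z)` vanishing at `-∞`, so the partial first moment is explicit, and the
constant part contributes `γ Λ(γ)`. Finally `(ν - 2 + γ²) / (ν - 1) = 1 + (γ² - 1) / (ν - 1)`. -/

theorem setIntegral_Iic_comp_sub_div {E : Type*} [NormedAddCommGroup E] [NormedSpace ℝ E]
    (g : ℝ → E) {τ : ℝ} (hτ : 0 < τ) (μ b : ℝ) :
    ∫ y in Iic b, g ((y - μ) / τ) = τ • ∫ z in Iic ((b - μ) / τ), g z := by
  have himage : (fun z => μ + τ * z) '' Iic ((b - μ) / τ) = Iic b := by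
    rw [← image_image (μ + ·) (τ * ·), image_mul_left_Iic hτ, image_const_add_Iic,
      mul_div_cancel₀ _ hτ.ne', add_sub_cancel]
  rw [← himage, integral_image_eq_integral_abs_deriv_smul measurableSet_Iic
      (fun z _ => (((hasDerivAt_id' z).const_mul τ).const_add μ).hasDerivWithinAt)
      ((add_right_injective μ).comp (mul_right_injective₀ hτ.ne')).injOn,
    mul_one, abs_of_pos hτ, integral_smul]
  simp [hτ.ne']

theorem integrable_one_add_sq_div_rpow_neg {a r : ℝ} (ha : 0 < a) (hr : 1 < r) :
    Integrable fun z : ℝ => (1 + z ^ 2 / a) ^ (-r / 2) := by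
  have h := (integrable_rpow_neg_one_add_norm_sq (E := ℝ) (r := r) (by simpa using hr)).comp_div
    (Real.sqrt_pos.2 ha).ne'
  refine h.congr (Eventually.of_forall fun z => ?_)
  simp [div_pow, Real.sq_sqrt ha.le]

section StudentT

variable {ν : ℝ}

noncomputable def tDensConst (ν : ℝ) : ℝ :=
  Real.Gamma ((ν + 1) / 2) / (Real.sqrt ((ν - 2) * Real.pi) * Real.Gamma (ν / 2))

theorem tDens_eq (ν z : ℝ) : tDens ν z = tDensConst ν * (1 + z ^ 2 / (ν - 2)) ^ (-(ν + 1) / 2) :=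
  rfl

theorem tDens_nonneg (hν : 2 < ν) (z : ℝ) : 0 ≤ tDens ν z := by
  have : 0 < ν - 2 := by linarith
  rw [tDens_eq, tDensConst]
  positivity

theorem integrable_tDens (hν : 2 < ν) : Integrable (tDens ν) :=
  (integrable_one_add_sq_div_rpow_neg (by linarith) (by linarith)).const_mul (tDensConst ν)

theorem abs_le_sqrt_mul_sqrt_one_add_sq_div {a : ℝ} (ha : 0 < a) (z : ℝ) :
    |z| ≤ √a * √(1 + z ^ 2 / a) := by
  rw [← Real.sqrt_mul ha.le, ← Real.sqrt_sq_eq_abs, mul_add, mul_one, mul_div_cancel₀ _ ha.ne']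
  exact Real.sqrt_le_sqrt (by linarith)

theorem integrable_mul_tDens (hν : 2 < ν) : Integrable fun z => z * tDens ν z := by
  have ha : 0 < ν - 2 := by linarith
  refine ((integrable_one_add_sq_div_rpow_neg ha (r := ν) (by linarith)).const_mul
    (√(ν - 2) * tDensConst ν)).mono' (by unfold tDens; fun_prop) (Eventually.of_forall fun z => ?_)
  have hw : 0 < 1 + z ^ 2 / (ν - 2) := by positivity
  rw [norm_mul, Real.norm_eq_abs, Real.norm_of_nonneg (tDens_nonneg hν z)]
  calc |z| * tDens ν z ≤ √(ν - 2) * √(1 + z ^ 2 / (ν - 2)) * tDens ν z :=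
        mul_le_mul_of_nonneg_right (abs_le_sqrt_mul_sqrt_one_add_sq_div ha z) (tDens_nonneg hν z)
    _ = √(ν - 2) * tDensConst ν * (1 + z ^ 2 / (ν - 2)) ^ (-ν / 2) := by
        rw [tDens_eq, Real.sqrt_eq_rpow (1 + _), show -ν / 2 = 1 / 2 + -(ν + 1) / 2 by ring,
          Real.rpow_add hw]
        ring

theorem hasDerivAt_tDens (hν : 2 < ν) (z : ℝ) :
    HasDerivAt (tDens ν) (-((ν + 1) * z / (ν - 2 + z ^ 2)) * tDens ν z) z := by
  have ha : 0 < ν - 2 := by linarith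
  have hw : 0 < 1 + z ^ 2 / (ν - 2) := by positivity
  have hinner : HasDerivAt (fun z : ℝ => 1 + z ^ 2 / (ν - 2)) (2 * z / (ν - 2)) z := by
    simpa using ((hasDerivAt_pow 2 z).div_const (ν - 2)).const_add 1
  refine ((hinner.rpow_const (p := -(ν + 1) / 2) (Or.inl hw.ne')).const_mul
    (tDensConst ν)).congr_deriv ?_
  rw [Real.rpow_sub_one hw.ne', tDens_eq]
  field_simp

theorem hasDerivAt_neg_sq_add_mul_tDens (hν : 2 < ν) (z : ℝ) :
    HasDerivAt (fun z => -((ν - 2 + z ^ 2) / (ν - 1)) * tDens ν z) (z * tDens ν z) z := by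
  refine ((((hasDerivAt_pow 2 z).const_add (ν - 2)).div_const (ν - 1)).neg.mul
    (hasDerivAt_tDens hν z)).congr_deriv ?_
  have : ν - 2 + z ^ 2 ≠ 0 := by nlinarith
  have : ν - 1 ≠ 0 := by linarith
  rw [Pi.neg_apply]
  field_simp
  ring

theorem tendsto_neg_sq_add_mul_tDens_atBot (hν : 2 < ν) :
    Tendsto (fun z => -((ν - 2 + z ^ 2) / (ν - 1)) * tDens ν z) atBot (𝓝 0) := by
  have ha : 0 < ν - 2 := by linarith
  have hbase : Tendsto (fun z : ℝ => 1 + z ^ 2 / (ν - 2)) atBot atTop :=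
    tendsto_atTop_add_const_left _ _ ((tendsto_pow_atTop two_ne_zero).comp
      tendsto_abs_atBot_atTop |>.atTop_div_const ha |>.congr fun z => by simp)
  have hdecay := ((tendsto_rpow_neg_atTop (y := (ν - 1) / 2) (by linarith)).comp hbase).const_mul
    (-((ν - 2) / (ν - 1)) * tDensConst ν)
  rw [mul_zero] at hdecay
  refine hdecay.congr fun z => ?_
  have hw : 0 < 1 + z ^ 2 / (ν - 2) := by positivity
  rw [Function.comp_apply, tDens_eq, show -((ν - 1) / 2) = -(ν + 1) / 2 + 1 by ring,
    Real.rpow_add_one hw.ne']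
  field_simp

theorem integral_Iic_mul_tDens (hν : 2 < ν) (γ : ℝ) :
    ∫ z in Iic γ, z * tDens ν z = -((ν - 2 + γ ^ 2) / (ν - 1)) * tDens ν γ := by
  rw [integral_Iic_of_hasDerivAt_of_tendsto' (fun z _ => hasDerivAt_neg_sq_add_mul_tDens hν z)
    (integrable_mul_tDens hν).integrableOn (tendsto_neg_sq_add_mul_tDens_atBot hν), sub_zero]

theorem integral_Iic_sub_mul_tDens (hν : 2 < ν) (γ : ℝ) :
    ∫ z in Iic γ, (γ - z) * tDens ν z = γ * tCDF ν γ + (ν - 2 + γ ^ 2) / (ν - 1) * tDens ν γ := by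
  simp_rw [sub_mul]
  rw [integral_sub ((integrable_tDens hν).integrableOn.const_mul γ)
    (integrable_mul_tDens hν).integrableOn, integral_const_mul, integral_Iic_mul_tDens hν, tCDF]
  ring

end StudentT

/-- Closed form for expected improvement under a univariate Student-t predictive. -/
theorem expected_improvement_student_t (ν' μ τ fbest : ℝ) (hν : ν' > 2) (hτ : τ > 0) :
    (∫ y in Set.Iic fbest, (fbest - y) * (1 / τ) * tDens ν' ((y - μ) / τ))
      = ((fbest - μ) / τ) * τ * tCDF ν' ((fbest - μ) / τ) +
        τ * (1 + (((fbest - μ) / τ) ^ 2 - 1) / (ν' - 1)) * tDens ν' ((fbest - μ) / τ) := by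
  have hintegrand (y : ℝ) : (fbest - y) * (1 / τ) * tDens ν' ((y - μ) / τ)
      = ((fbest - μ) / τ - (y - μ) / τ) * tDens ν' ((y - μ) / τ) := by
    field_simp
    ring
  simp_rw [hintegrand]
  rw [setIntegral_Iic_comp_sub_div (fun z => ((fbest - μ) / τ - z) * tDens ν' z) hτ,
    integral_Iic_sub_mul_tDens hν, smul_eq_mul]
  have : ν' - 1 ≠ 0 := by linarith
  field_simp
  ring
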